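/- Every product integral is invertible, and its inverse is obtained by reversing the limits: (∏_s^t (I + A(x) dx))^{-1} = ∏_t^s (I + A(x) dx). -/

import Mathlib

open Set

attribute [local instance] Matrix.linftyOpNormedRing Matrix.linftyOpNormedAlgebra

/-! Both `u ↦ F s u` and `u ↦ F s t * F t u` solve `Y' = Y A` and agree at `u = t`; since
`Y ↦ Y A` is Lipschitz, uniformly on bounded time intervals, they coincide. This gives
`F s t * F t u = F s u`, and `u = s` yields `F s t * F t s = F s s = 1`. -/

theorem lipschitzWith_mul_right {R : Type*} [SeminormedRing R] (a : R) :
    LipschitzWith ‖a‖₊ (· * a) :=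
  .of_dist_le_mul fun x y => by
    simpa [dist_eq_norm, ← sub_mul, mul_comm ‖a‖] using norm_mul_le (x - y) a

section LinearODE

variable {R : Type*} [NormedRing R] {A : ℝ → R}

theorem eq_of_hasDerivAt_mul_right [NormedSpace ℝ R] (hA : Continuous A) {f g : ℝ → R}
    (hf : ∀ t, HasDerivAt f (f t * A t) t) (hg : ∀ t, HasDerivAt g (g t * A t) t)
    {t₀ : ℝ} (h : f t₀ = g t₀) : f = g := by
  ext t
  set r := |t| + |t₀| + 1
  have mem_Ioo {x : ℝ} (hx : |x| < r) : x ∈ Ioo (-r) r := abs_lt.mp hx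
  obtain ⟨C, hC⟩ :=
    (isCompact_Icc (a := -r) (b := r)).exists_bound_of_continuousOn hA.continuousOn
  have hlip : ∀ x ∈ Ioo (-r) r, LipschitzOnWith C.toNNReal (· * A x) univ := fun x hx =>
    have hAx : ‖A x‖₊ ≤ C.toNNReal :=
      NNReal.coe_le_coe.mp ((hC x (Ioo_subset_Icc_self hx)).trans (Real.le_coe_toNNReal C))
    ((lipschitzWith_mul_right (A x)).weaken hAx).lipschitzOnWith
  exact ODE_solution_unique_of_mem_Ioo hlip (mem_Ioo (by linarith [abs_nonneg t]))
    (fun x _ => ⟨hf x, mem_univ _⟩) (fun x _ => ⟨hg x, mem_univ _⟩) h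
    (mem_Ioo (by linarith [abs_nonneg t₀]))

theorem productIntegral_mul [NormedAlgebra ℝ R] (hA : Continuous A) {F : ℝ → ℝ → R}
    (hF : ∀ s t, HasDerivAt (F s) (F s t * A t) t) (hF0 : ∀ s, F s s = 1) (s t u : ℝ) :
    F s t * F t u = F s u :=
  congrFun (eq_of_hasDerivAt_mul_right hA (f := fun u => F s t * F t u) (t₀ := t)
    (fun u => by simpa only [mul_assoc] using (hF t u).const_mul (F s t)) (hF s)
    (by rw [hF0, mul_one])) u

end LinearODE

/-- Every product integral is invertible, and its inverse is obtained by
reversing the limits of integration: `(∏_s^t (I + A(x) dx))⁻¹ = ∏_t^s (I + A(x) dx)`.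
Here `F (s, t)` denotes the product integral, i.e. the solution of
`∂/∂t F (s, t) = F (s, t) * A t`, `F (s, s) = 1`, defined for all real `s`, `t`. -/
theorem productIntegral_inverse_reverse {p : ℕ}
    (A : ℝ → Matrix (Fin p) (Fin p) ℝ) (hA : Continuous A)
    (F : ℝ → ℝ → Matrix (Fin p) (Fin p) ℝ)
    (hF : ∀ s t : ℝ, HasDerivAt (fun u => F s u) (F s t * A t) t)
    (hF0 : ∀ s : ℝ, F s s = 1) :
    ∀ s t : ℝ, IsUnit (F s t) ∧ F s t * F t s = 1 ∧ F t s * F s t = 1 := by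
  have mul_reverse (s t : ℝ) : F s t * F t s = 1 := by
    rw [productIntegral_mul hA hF hF0, hF0]
  intro s t
  exact ⟨(Units.mk _ _ (mul_reverse s t) (mul_reverse t s)).isUnit,
    mul_reverse s t, mul_reverse t s⟩
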